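/- arXiv:1907.10829 — 5 statements merged into one kernel-verified Lean document; each statement's English description precedes it below -/
import Mathlib

section
/- If (Ω,d) is a separable metric space such that d² is a semimetric of negative type, then the metric auto-covariance kernel C(s,t) = Cov_Ω(X(s), X(t)) of an Ω-valued stochastic process X on [0,1] is symmetric and nonnegative definite: for any k, any a₁,…,a_k ∈ ℝ and s₁,…,s_k ∈ [0,1], Σᵢⱼ aᵢaⱼ C(sᵢ,sⱼ) ≥ 0. -/
/-!
Since `X` and `X'` have the same law, the term `2 d²(X(s), X(t))` in `C(s, t)` may be replaced by
`d²(X(s), X(t)) + d²(X'(s), X'(t))`. After this, the integrand of `Σᵢⱼ cᵢ cⱼ C(sᵢ, sⱼ)` is, pointwise,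
minus the quadratic form of `d²` on the `2k` points `X(sᵢ), X'(sᵢ)` with weights `cᵢ, -cᵢ`. These
weights sum to zero, so negative type makes the integrand nonnegative.
-/

open MeasureTheory ProbabilityTheory

section NegativeType

variable {Ω : Type*} [PseudoMetricSpace Ω]

theorem sum_mul_mul_dist_sq_nonpos_of_negType
    (hneg : ∀ (n : ℕ) (z : Fin n → Ω) (c : Fin n → ℝ), 2 ≤ n → (∑ i, c i) = 0 →
      ∑ i, ∑ j, c i * c j * (dist (z i) (z j)) ^ 2 ≤ 0)
    {ι : Type*} [Fintype ι] (z : ι → Ω) (c : ι → ℝ) (hc : ∑ i, c i = 0) :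
    ∑ i, ∑ j, c i * c j * dist (z i) (z j) ^ 2 ≤ 0 := by
  rcases le_or_gt 2 (Fintype.card ι) with hcard | hcard
  · let e := (Fintype.equivFin ι).symm
    have hc' : ∑ i, c (e i) = 0 := by rwa [Equiv.sum_comp e c]
    convert hneg _ (z ∘ e) (c ∘ e) hcard hc' using 1
    rw [← Equiv.sum_comp e]
    exact Fintype.sum_congr _ _ fun i => (Equiv.sum_comp e _).symm
  · have : Subsingleton ι := Fintype.card_le_one_iff_subsingleton.mp (by omega)
    have hz : ∀ i j, dist (z i) (z j) = 0 := fun i j => by rw [Subsingleton.elim i j, dist_self]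
    simp [hz]

/-- If `d² = ‖f · - f ·‖²` for a Hilbert embedding `f`, this is `2 ⟪f x - f x', f y - f y'⟫`. -/
def crossDistSq (x x' y y' : Ω) : ℝ :=
  dist x y' ^ 2 + dist x' y ^ 2 - dist x y ^ 2 - dist x' y' ^ 2

theorem sum_mul_mul_crossDistSq_nonneg
    (hneg : ∀ (n : ℕ) (z : Fin n → Ω) (c : Fin n → ℝ), 2 ≤ n → (∑ i, c i) = 0 →
      ∑ i, ∑ j, c i * c j * (dist (z i) (z j)) ^ 2 ≤ 0)
    {ι : Type*} [Fintype ι] (x y : ι → Ω) (c : ι → ℝ) :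
    0 ≤ ∑ i, ∑ j, c i * c j * crossDistSq (x i) (y i) (x j) (y j) := by
  have hw : ∑ p, Sum.elim c (-c) p = 0 := by simp [Fintype.sum_sum_type]
  have h := sum_mul_mul_dist_sq_nonpos_of_negType hneg (Sum.elim x y) _ hw
  simp only [Fintype.sum_sum_type, Sum.elim_inl, Sum.elim_inr, Pi.neg_apply, neg_mul, mul_neg,
    Finset.sum_neg_distrib, Finset.sum_add_distrib] at h
  simp only [crossDistSq, mul_add, mul_sub, Finset.sum_add_distrib, Finset.sum_sub_distrib]
  linarith

end NegativeType

section Integrals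

variable {α Ω : Type*} {mα : MeasurableSpace α} {μ : Measure α}
  [MeasurableSpace Ω] [PseudoMetricSpace Ω] [OpensMeasurableSpace Ω] [SecondCountableTopology Ω]

theorem integrable_dist_sq_of_isBounded [IsFiniteMeasure μ]
    (hb : Bornology.IsBounded (Set.univ : Set Ω)) {f g : α → Ω}
    (hf : Measurable f) (hg : Measurable g) :
    Integrable (fun a => dist (f a) (g a) ^ 2) μ := by
  obtain ⟨R, hR⟩ := Metric.isBounded_iff.mp hb
  refine .of_bound ((hf.dist hg).pow_const 2).aestronglyMeasurable (R ^ 2) ?_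
  filter_upwards with a
  rw [Real.norm_of_nonneg (sq_nonneg _)]
  exact pow_le_pow_left₀ dist_nonneg (hR trivial trivial) 2

theorem integral_dist_sq_eq_of_identDistrib {X X' : α → ℝ → Ω} (hid : IdentDistrib X X' μ μ)
    (s t : ℝ) :
    ∫ a, dist (X' a s) (X' a t) ^ 2 ∂μ = ∫ a, dist (X a s) (X a t) ^ 2 ∂μ := by
  have hu : Measurable fun g : ℝ → Ω => dist (g s) (g t) ^ 2 := by fun_prop
  exact (hid.comp hu).integral_eq.symm

theorem integrable_crossDistSq [IsFiniteMeasure μ] (hb : Bornology.IsBounded (Set.univ : Set Ω))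
    {x x' y y' : α → Ω} (hx : Measurable x) (hx' : Measurable x') (hy : Measurable y)
    (hy' : Measurable y') :
    Integrable (fun a => crossDistSq (x a) (x' a) (y a) (y' a)) μ :=
  (((integrable_dist_sq_of_isBounded hb hx hy').add
    (integrable_dist_sq_of_isBounded hb hx' hy)).sub
      (integrable_dist_sq_of_isBounded hb hx hy)).sub (integrable_dist_sq_of_isBounded hb hx' hy')

theorem integral_covIntegrand_eq_integral_crossDistSq [IsFiniteMeasure μ]
    (hb : Bornology.IsBounded (Set.univ : Set Ω)) {X X' : α → ℝ → Ω} (hid : IdentDistrib X X' μ μ)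
    {s t : ℝ} (hXs : Measurable fun a => X a s) (hXt : Measurable fun a => X a t)
    (hX's : Measurable fun a => X' a s) (hX't : Measurable fun a => X' a t) :
    ∫ a, (dist (X a s) (X' a t) ^ 2 + dist (X' a s) (X a t) ^ 2
        - 2 * dist (X a s) (X a t) ^ 2) ∂μ =
      ∫ a, crossDistSq (X a s) (X' a s) (X a t) (X' a t) ∂μ := by
  have hA := integrable_dist_sq_of_isBounded (μ := μ) hb hXs hX't
  have hB := integrable_dist_sq_of_isBounded (μ := μ) hb hX's hXt
  have hD := integrable_dist_sq_of_isBounded (μ := μ) hb hXs hXt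
  have hD' := integrable_dist_sq_of_isBounded (μ := μ) hb hX's hX't
  have hAB : Integrable (fun a => dist (X a s) (X' a t) ^ 2 + dist (X' a s) (X a t) ^ 2) μ :=
    hA.add hB
  have hABD : Integrable (fun a => dist (X a s) (X' a t) ^ 2 + dist (X' a s) (X a t) ^ 2
      - dist (X a s) (X a t) ^ 2) μ := hAB.sub hD
  simp only [crossDistSq]
  rw [integral_sub hAB (hD.const_mul 2), integral_sub hABD hD', integral_sub hAB hD,
    integral_const_mul, integral_dist_sq_eq_of_identDistrib hid]
  ring

end Integrals

theorem stmt_5_general {α Ω : Type*} {mα : MeasurableSpace α} (μ : Measure α) [IsProbabilityMeasure μ]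
    [MeasurableSpace Ω] [MetricSpace Ω] [BorelSpace Ω] [TopologicalSpace.SeparableSpace Ω]
    (htb : TotallyBounded (Set.univ : Set Ω))
    (hneg : ∀ (n : ℕ) (z : Fin n → Ω) (c : Fin n → ℝ), 2 ≤ n → (∑ i, c i) = 0 →
      ∑ i, ∑ j, c i * c j * (dist (z i) (z j)) ^ 2 ≤ 0)
    (X X' : α → ℝ → Ω)
    (hmeas : ∀ t ∈ Set.Icc (0:ℝ) 1, Measurable (fun a => X a t))
    (hmeas' : ∀ t ∈ Set.Icc (0:ℝ) 1, Measurable (fun a => X' a t))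
    (hid : IdentDistrib X X' μ μ)
    (C : ℝ → ℝ → ℝ)
    (hC : ∀ s t : ℝ, C s t = (1 / 4) * ∫ a, ((dist (X a s) (X' a t)) ^ 2
        + (dist (X' a s) (X a t)) ^ 2 - 2 * (dist (X a s) (X a t)) ^ 2) ∂μ) :
    (∀ s ∈ Set.Icc (0:ℝ) 1, ∀ t ∈ Set.Icc (0:ℝ) 1, C s t = C t s) ∧
    ∀ (k : ℕ) (c : Fin k → ℝ) (s : Fin k → ℝ), (∀ i, s i ∈ Set.Icc (0:ℝ) 1) →
      0 ≤ ∑ i, ∑ j, c i * c j * C (s i) (s j) := by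
  have : SecondCountableTopology Ω := UniformSpace.secondCountable_of_separable Ω
  have hb := htb.isBounded
  refine ⟨fun s _ t _ => ?_, fun k c s hs => ?_⟩
  · rw [hC s t, hC t s]
    congr 1
    refine integral_congr_ae (.of_forall fun a => ?_)
    simp only [dist_comm (X a t), dist_comm (X' a t)]
    ring
  · have hXs i := hmeas (s i) (hs i)
    have hX's i := hmeas' (s i) (hs i)
    let K a i j := crossDistSq (X a (s i)) (X' a (s i)) (X a (s j)) (X' a (s j))
    have hCK i j : C (s i) (s j) = 1 / 4 * ∫ a, K a i j ∂μ := by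
      rw [hC, integral_covIntegrand_eq_integral_crossDistSq hb hid (hXs i) (hXs j) (hX's i)
        (hX's j)]
    have hKint i j : Integrable (fun a => c i * c j * K a i j) μ :=
      (integrable_crossDistSq hb (hXs i) (hX's i) (hXs j) (hX's j)).const_mul _
    calc 0 ≤ 1 / 4 * ∫ a, ∑ i, ∑ j, c i * c j * K a i j ∂μ :=
          mul_nonneg (by norm_num) (integral_nonneg fun a =>
            sum_mul_mul_crossDistSq_nonneg hneg (fun i => X a (s i)) (fun i => X' a (s i)) c)
      _ = ∑ i, ∑ j, c i * c j * C (s i) (s j) := by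
          simp only [hCK, integral_finsetSum _ fun i _ => integrable_finsetSum _ fun j _ =>
            hKint i j, integral_finsetSum _ fun j _ => hKint _ j, integral_const_mul,
            Finset.mul_sum]
          ring_nf

/-- If `(Ω,d)` is a separable (totally bounded) metric space with `d²` a semimetric of
negative type, then the metric auto-covariance kernel
`C(s,t) = Cov_Ω(X(s), X(t))` of an `Ω`-valued stochastic process `X` on `[0,1]` is
symmetric and nonnegative definite. -/
theorem stmt_5 {α Ω : Type*} {mα : MeasurableSpace α} (μ : Measure α) [IsProbabilityMeasure μ]
    [MeasurableSpace Ω] [MetricSpace Ω] [BorelSpace Ω] [TopologicalSpace.SeparableSpace Ω]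
    (htb : TotallyBounded (Set.univ : Set Ω))
    (hneg : ∀ (n : ℕ) (z : Fin n → Ω) (c : Fin n → ℝ), 2 ≤ n → (∑ i, c i) = 0 →
      ∑ i, ∑ j, c i * c j * (dist (z i) (z j)) ^ 2 ≤ 0)
    (X X' : α → ℝ → Ω)
    (hmeas : ∀ t ∈ Set.Icc (0:ℝ) 1, Measurable (fun a => X a t))
    (hmeas' : ∀ t ∈ Set.Icc (0:ℝ) 1, Measurable (fun a => X' a t))
    (hindep : IndepFun X X' μ) (hid : IdentDistrib X X' μ μ)
    (C : ℝ → ℝ → ℝ)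
    (hC : ∀ s t : ℝ, C s t = (1 / 4) * ∫ a, ((dist (X a s) (X' a t)) ^ 2
        + (dist (X' a s) (X a t)) ^ 2 - 2 * (dist (X a s) (X a t)) ^ 2) ∂μ) :
    (∀ s ∈ Set.Icc (0:ℝ) 1, ∀ t ∈ Set.Icc (0:ℝ) 1, C s t = C t s) ∧
    ∀ (k : ℕ) (c : Fin k → ℝ) (s : Fin k → ℝ), (∀ i, s i ∈ Set.Icc (0:ℝ) 1) →
      0 ≤ ∑ i, ∑ j, c i * c j * C (s i) (s j) :=
  stmt_5_general (mα := mα) μ htb hneg X X' hmeas hmeas' hid C hC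
end

section
/- Let H be a Hilbert space, H₁,…,H_k and H'₁,…,H'_k be H-valued random variables such that (H'₁,…,H'_k) is an independent copy of (H₁,…,H_k), all with finite second moments. Then for any a₁,…,a_k ∈ ℝ, E[4⟨Σaᵢ Hᵢ, Σaⱼ Hⱼ⟩ − 2⟨Σaᵢ Hᵢ, Σaⱼ H'ⱼ⟩ − 2⟨Σaᵢ H'ᵢ, Σaⱼ Hⱼ⟩] ≥ Var(‖Σaᵢ Hᵢ‖) ≥ 0. -/
/-!
Put `S = Σ cᵢ Hᵢ` and `S' = Σ cᵢ H'ᵢ`. Expanding bilinearly, independence of each `Hᵢ` from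
each `H'ⱼ` gives `E⟨S, S'⟩ = ⟨E S, E S'⟩`, and `E S' = E S`, so the integrand has expectation
`4 (E‖S‖² - ‖E S‖²)`. On the other hand `Var ‖S‖ = E‖S‖² - (E‖S‖)² ≤ E‖S‖² - ‖E S‖²` because
`‖E S‖ ≤ E‖S‖`; in particular `E‖S‖² - ‖E S‖² ≥ 0`, so multiplying it by 4 only helps.
-/

open MeasureTheory ProbabilityTheory
open scoped RealInnerProductSpace

section

variable {α H : Type*} {mα : MeasurableSpace α} {μ : Measure α}
  [NormedAddCommGroup H] [InnerProductSpace ℝ H]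

theorem MeasureTheory.MemLp.integrable_inner {f g : α → H} (hf : MemLp f 2 μ)
    (hg : MemLp g 2 μ) : Integrable (fun a => ⟪f a, g a⟫) μ :=
  (L2.integrable_inner (𝕜 := ℝ) (hf.toLp f) (hg.toLp g)).congr <| by
    filter_upwards [hf.coeFn_toLp, hg.coeFn_toLp] with a hfa hga
    rw [hfa, hga]

theorem real_inner_sum_smul_sum_smul {ι κ : Type*} (s : Finset ι) (t : Finset κ)
    (c : ι → ℝ) (d : κ → ℝ) (x : ι → H) (z : κ → H) :
    ⟪∑ i ∈ s, c i • x i, ∑ j ∈ t, d j • z j⟫ = ∑ i ∈ s, ∑ j ∈ t, c i * d j * ⟪x i, z j⟫ := by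
  simp_rw [sum_inner, real_inner_smul_left, inner_sum, real_inner_smul_right, Finset.mul_sum,
    mul_assoc]

theorem integral_sum_smul {ι : Type*} (s : Finset ι) {X : ι → α → H}
    (hX : ∀ i, Integrable (X i) μ) (c : ι → ℝ) :
    ∫ a, ∑ i ∈ s, c i • X i a ∂μ = ∑ i ∈ s, c i • ∫ a, X i a ∂μ := by
  rw [integral_finsetSum (f := fun i a => c i • X i a) s fun i _ => (hX i).smul (c i)]
  simp only [integral_smul]

section Independence

variable [CompleteSpace H] [MeasurableSpace H] [BorelSpace H]

theorem integral_inner_sum_smul_of_indepFun {ι κ : Type*} [Fintype ι] [Fintype κ]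
    {X : ι → α → H} {Z : κ → α → H} (hX : ∀ i, Integrable (X i) μ)
    (hZ : ∀ j, Integrable (Z j) μ) (hXZ : ∀ i j, IndepFun (X i) (Z j) μ)
    (c : ι → ℝ) (d : κ → ℝ) :
    ∫ a, ⟪∑ i, c i • X i a, ∑ j, d j • Z j a⟫ ∂μ
      = ⟪∫ a, ∑ i, c i • X i a ∂μ, ∫ a, ∑ j, d j • Z j a ∂μ⟫ := by
  have hXZint : ∀ i j, Integrable (fun a => ⟪X i a, Z j a⟫) μ := fun i j =>
    (hXZ i j).integrable_bilin (hX i) (hZ j) (innerSL ℝ)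
  have hXZ_inner : ∀ i j, ∫ a, ⟪X i a, Z j a⟫ ∂μ = ⟪∫ a, X i a ∂μ, ∫ a, Z j a ∂μ⟫ := fun i j =>
    (hXZ i j).integral_bilin (hX i) (hZ j) (innerSL ℝ)
  simp only [real_inner_sum_smul_sum_smul, integral_sum_smul _ hX, integral_sum_smul _ hZ]
  rw [integral_finsetSum _ fun i _ => integrable_finsetSum _ fun j _ =>
    (hXZint i j).const_mul _]
  refine Finset.sum_congr rfl fun i _ => ?_
  rw [integral_finsetSum _ fun j _ => (hXZint i j).const_mul _]
  refine Finset.sum_congr rfl fun j _ => ?_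
  rw [integral_const_mul, hXZ_inner]

end Independence

theorem variance_norm_le_integral_norm_sq_sub_norm_integral_sq [IsProbabilityMeasure μ]
    {E : Type*} [NormedAddCommGroup E] [NormedSpace ℝ E] {S : α → E} (hS : MemLp S 2 μ) :
    variance (fun a => ‖S a‖) μ ≤ ∫ a, ‖S a‖ ^ 2 ∂μ - ‖∫ a, S a ∂μ‖ ^ 2 := by
  rw [variance_eq_sub hS.norm]
  have := pow_le_pow_left₀ (norm_nonneg _) (norm_integral_le_integral_norm S (μ := μ)) 2
  simp only [Pi.pow_apply]
  linarith

theorem variance_norm_le_integral_inner_of_uncorrelated [IsProbabilityMeasure μ] {S S' : α → H}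
    (hS : MemLp S 2 μ) (hS' : MemLp S' 2 μ)
    (hcross : ∫ a, ⟪S a, S' a⟫ ∂μ = ⟪∫ a, S a ∂μ, ∫ a, S' a ∂μ⟫)
    (hmean : ∫ a, S' a ∂μ = ∫ a, S a ∂μ) :
    variance (fun a => ‖S a‖) μ ≤
      ∫ a, (4 * ⟪S a, S a⟫ - 2 * ⟪S a, S' a⟫ - 2 * ⟪S' a, S a⟫) ∂μ := by
  have hvar := variance_norm_le_integral_norm_sq_sub_norm_integral_sq hS
  have hgap := (variance_nonneg (fun a => ‖S a‖) μ).trans hvar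
  calc variance (fun a => ‖S a‖) μ
      ≤ 4 * (∫ a, ‖S a‖ ^ 2 ∂μ - ‖∫ a, S a ∂μ‖ ^ 2) := by linarith
    _ = 4 * (∫ a, ‖S a‖ ^ 2 ∂μ - ∫ a, ⟪S a, S' a⟫ ∂μ) := by
        rw [hcross, hmean, real_inner_self_eq_norm_sq]
    _ = ∫ a, 4 * (‖S a‖ ^ 2 - ⟪S a, S' a⟫) ∂μ := by
        rw [integral_const_mul, integral_sub hS.norm.integrable_sq (hS.integrable_inner hS')]
    _ = _ := by
        congr 1 with a
        rw [real_inner_self_eq_norm_sq, real_inner_comm (S' a)]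
        ring

end

/-- For Hilbert-space valued random variables `H₁,…,H_k` with `(H'₁,…,H'_k)` an
independent copy, all with finite second moments, and any reals `a₁,…,a_k`:
`E[4⟨Σaᵢ Hᵢ, Σaⱼ Hⱼ⟩ - 2⟨Σaᵢ Hᵢ, Σaⱼ H'ⱼ⟩ - 2⟨Σaᵢ H'ᵢ, Σaⱼ Hⱼ⟩] ≥ Var(‖Σaᵢ Hᵢ‖) ≥ 0`. -/
theorem stmt_6 {α H : Type*} {mα : MeasurableSpace α} (μ : Measure α) [IsProbabilityMeasure μ]
    [NormedAddCommGroup H] [InnerProductSpace ℝ H] [CompleteSpace H]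
    [MeasurableSpace H] [BorelSpace H]
    (k : ℕ) (Y Y' : Fin k → α → H)
    (hY : ∀ i, MemLp (Y i) 2 μ) (hY' : ∀ i, MemLp (Y' i) 2 μ)
    (hindep : IndepFun (fun a (i : Fin k) => Y i a) (fun a (i : Fin k) => Y' i a) μ)
    (hid : IdentDistrib (fun a (i : Fin k) => Y i a) (fun a (i : Fin k) => Y' i a) μ μ)
    (c : Fin k → ℝ) :
    variance (fun a => ‖∑ i, c i • Y i a‖) μ ≤
      ∫ a, (4 * ⟪∑ i, c i • Y i a, ∑ j, c j • Y j a⟫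
        - 2 * ⟪∑ i, c i • Y i a, ∑ j, c j • Y' j a⟫
        - 2 * ⟪∑ i, c i • Y' i a, ∑ j, c j • Y j a⟫) ∂μ ∧
    0 ≤ variance (fun a => ‖∑ i, c i • Y i a‖) μ := by
  have hYint : ∀ i, Integrable (Y i) μ := fun i => (hY i).integrable one_le_two
  have hY'int : ∀ i, Integrable (Y' i) μ := fun i => (hY' i).integrable one_le_two
  -- Without second countability, `y ↦ Σ cᵢ yᵢ` need not be measurable on `Fin k → H`, so
  -- independence is transported to the components only.
  have hcross := integral_inner_sum_smul_of_indepFun hYint hY'int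
    (fun i j => hindep.comp (measurable_pi_apply i) (measurable_pi_apply j)) c c
  have hmean : ∫ a, ∑ i, c i • Y' i a ∂μ = ∫ a, ∑ i, c i • Y i a ∂μ := by
    have hmean_comp (i : Fin k) : ∫ a, Y' i a ∂μ = ∫ a, Y i a ∂μ :=
      (hid.comp (measurable_pi_apply i)).integral_eq.symm
    simp only [integral_sum_smul _ hYint, integral_sum_smul _ hY'int, hmean_comp]
  have hSmem (Z : Fin k → α → H) (hZ : ∀ i, MemLp (Z i) 2 μ) :
      MemLp (fun a => ∑ i, c i • Z i a) 2 μ :=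
    memLp_finsetSum _ fun i _ => (hZ i).const_smul (c i)
  exact ⟨variance_norm_le_integral_inner_of_uncorrelated (hSmem Y hY) (hSmem Y' hY') hcross hmean,
    variance_nonneg _ _⟩
end

section
/- Under the curvature condition: there exist β > 0, ν > 0, C > 0 such that I(ω) − I(ω*) ≥ C·d(ω,ω*)^β whenever d(ω,ω*) < ν, and given that h(ε_P)·sup_ω|I_P(ω) − I(ω)| → 0 for a function h with h(δ)→∞ as δ→0, and that d(ω_P, ω*) → 0, one has h(ε_P)^{1/β}·d(ω_P, ω*) → 0 as the mesh ε_P → 0. -/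
/-!
Since `ω_P` minimizes `I_P`, the gap `I(ω_P) - I(ω*)` is at most `2 sup |I_P - I|`, so
`h(ε_P) (I(ω_P) - I(ω*)) → 0`. Once `ω_P` is within `ν` of `ω*`, the curvature condition turns
this into `h(ε_P) d(ω_P, ω*)^β → 0`, and taking `β`-th roots gives the claim.
-/

theorem sub_le_abs_sub_add_abs_sub_of_le {α : Type*} {J I : α → ℝ} {x y : α} (hxy : J x ≤ J y) :
    I x - I y ≤ |J x - I x| + |J y - I y| := by
  linarith [neg_abs_le (J x - I x), le_abs_self (J y - I y)]

theorem Real.rpow_one_div_mul_le_of_mul_rpow_le {a r ε β : ℝ} (ha : 0 ≤ a) (hr : 0 ≤ r)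
    (hε : 0 ≤ ε) (hβ : 0 < β) (h : a * r ^ β ≤ ε ^ β) : a ^ (1 / β) * r ≤ ε := by
  have hpow : (a ^ (1 / β) * r) ^ β = a * r ^ β := by
    rw [Real.mul_rpow (Real.rpow_nonneg ha _) hr, ← Real.rpow_mul ha, one_div_mul_cancel hβ.ne',
      Real.rpow_one]
  rw [← Real.rpow_le_rpow_iff (mul_nonneg (Real.rpow_nonneg ha _) hr) hε hβ, hpow]
  exact h

theorem stmt_13_general {Ω ι : Type*} [MetricSpace Ω]
    (I : Ω → ℝ) (IP : ι → Ω → ℝ) (eps : ι → ℝ) (heps : ∀ i, 0 < eps i)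
    (ωP : ι → Ω) (ωstar : Ω)
    (hmin : ∀ (i : ι) (ω : Ω), IP i (ωP i) ≤ IP i ω)
    (β ν C : ℝ) (hβ : 0 < β) (hν : 0 < ν) (hC : 0 < C)
    (hcurv : ∀ ω : Ω, dist ω ωstar < ν → C * dist ω ωstar ^ β ≤ I ω - I ωstar)
    (h : ℝ → ℝ) (hpos : ∀ x > (0:ℝ), 0 < h x)
    (hconv : ∀ ε > (0:ℝ), ∃ δ > (0:ℝ), ∀ i, eps i < δ →
      ∀ ω : Ω, h (eps i) * |IP i ω - I ω| ≤ ε)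
    (hd : ∀ ε > (0:ℝ), ∃ δ > (0:ℝ), ∀ i, eps i < δ → dist (ωP i) ωstar < ε) :
    ∀ ε > (0:ℝ), ∃ δ > (0:ℝ), ∀ i, eps i < δ →
      h (eps i) ^ ((1:ℝ) / β) * dist (ωP i) ωstar ≤ ε := by
  intro ε hε
  obtain ⟨δ₁, hδ₁, hclose⟩ := hconv (C * ε ^ β / 2) (by positivity)
  obtain ⟨δ₂, hδ₂, hnear⟩ := hd ν hν
  refine ⟨min δ₁ δ₂, lt_min hδ₁ hδ₂, fun i hi => ?_⟩
  have hi₁ : eps i < δ₁ := hi.trans_le (min_le_left _ _)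
  have hhi : 0 < h (eps i) := hpos _ (heps i)
  have hgap : h (eps i) * (I (ωP i) - I ωstar) ≤ C * ε ^ β :=
    calc h (eps i) * (I (ωP i) - I ωstar)
        ≤ h (eps i) * (|IP i (ωP i) - I (ωP i)| + |IP i ωstar - I ωstar|) :=
          mul_le_mul_of_nonneg_left (sub_le_abs_sub_add_abs_sub_of_le (hmin i ωstar)) hhi.le
      _ ≤ C * ε ^ β := by
          linarith [mul_add (h (eps i)) |IP i (ωP i) - I (ωP i)| |IP i ωstar - I ωstar|,
            hclose i hi₁ (ωP i), hclose i hi₁ ωstar]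
  have hcurvi := hcurv (ωP i) (hnear i (hi.trans_le (min_le_right _ _)))
  refine Real.rpow_one_div_mul_le_of_mul_rpow_le hhi.le dist_nonneg hε.le hβ
    (le_of_mul_le_mul_left ?_ hC)
  calc C * (h (eps i) * dist (ωP i) ωstar ^ β)
      = h (eps i) * (C * dist (ωP i) ωstar ^ β) := by ring
    _ ≤ h (eps i) * (I (ωP i) - I ωstar) := mul_le_mul_of_nonneg_left hcurvi hhi.le
    _ ≤ C * ε ^ β := hgap

/-- Under the curvature condition `I(ω) - I(ω*) ≥ C d(ω,ω*)^β` near the unique minimizer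
`ω*`, if `h(ε_P) · sup_ω |I_P(ω) - I(ω)| → 0` for a function `h` with `h(δ) → ∞` as
`δ → 0`, and `d(ω_P, ω*) → 0`, then `h(ε_P)^{1/β} · d(ω_P, ω*) → 0` as the mesh
`ε_P → 0`. -/
theorem stmt_13 {Ω ι : Type*} [MetricSpace Ω]
    (I : Ω → ℝ) (IP : ι → Ω → ℝ) (eps : ι → ℝ) (heps : ∀ i, 0 < eps i)
    (ωP : ι → Ω) (ωstar : Ω)
    (hmin : ∀ (i : ι) (ω : Ω), IP i (ωP i) ≤ IP i ω)
    (hstar : ∀ ω : Ω, I ωstar ≤ I ω)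
    (hsep : ∀ δ > (0:ℝ), ∃ η > (0:ℝ), ∀ ω : Ω, δ < dist ω ωstar → I ωstar + η ≤ I ω)
    (β ν C : ℝ) (hβ : 0 < β) (hν : 0 < ν) (hC : 0 < C)
    (hcurv : ∀ ω : Ω, dist ω ωstar < ν → C * dist ω ωstar ^ β ≤ I ω - I ωstar)
    (h : ℝ → ℝ) (hpos : ∀ x > (0:ℝ), 0 < h x)
    (hh : Filter.Tendsto h (nhdsWithin 0 (Set.Ioi 0)) Filter.atTop)
    (hconv : ∀ ε > (0:ℝ), ∃ δ > (0:ℝ), ∀ i, eps i < δ →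
      ∀ ω : Ω, h (eps i) * |IP i ω - I ω| ≤ ε)
    (hd : ∀ ε > (0:ℝ), ∃ δ > (0:ℝ), ∀ i, eps i < δ → dist (ωP i) ωstar < ε) :
    ∀ ε > (0:ℝ), ∃ δ > (0:ℝ), ∀ i, eps i < δ →
      h (eps i) ^ ((1:ℝ) / β) * dist (ωP i) ωstar ≤ ε :=
  stmt_13_general I IP eps heps ωP ωstar hmin β ν C hβ hν hC hcurv h hpos hconv hd
end

section
/- Let (Ω,d) be a bounded metric space and X an Ω-valued stochastic process on [0,1] with almost surely continuous sample paths. Suppose for each t the Fréchet mean μ(t) = argmin_ω E[d²(ω,X(t))] exists, is unique, and satisfies inf_{d(ω,μ(t))>γ} E[d²(ω,X(t))] > E[d²(μ(t),X(t))] for every γ > 0. Then the Fréchet mean function t ↦ μ(t) is continuous on [0,1]. -/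
/-!
The Fréchet function `F_t ω = E d²(ω, X t)` moves by at most `2 D · E d(X s, X t)` when `t` is
replaced by `s`, uniformly in `ω`, and `E d(X s, X t) → 0` as `s → t` by dominated convergence.
A uniformly small perturbation cannot move the minimizer far from a well-separated minimum: if
`d(μ s, μ t) > γ`, then `F_t (μ s) ≥ F_t (μ t) + η`, while minimality of `μ s` for `F_s` forces
`F_t (μ s) ≤ F_t (μ t) + 2 sup |F_s - F_t|`.
-/

open MeasureTheory Filter Topology Set

theorem tendsto_of_tendstoUniformly_of_separated_min {ι Ω : Type*} [PseudoMetricSpace Ω]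
    {F : ι → Ω → ℝ} {G : Ω → ℝ} {l : Filter ι} {m : ι → Ω} {m₀ : Ω}
    (hF : TendstoUniformly F G l) (hm : ∀ᶠ i in l, ∀ ω, F i (m i) ≤ F i ω)
    (hsep : ∀ γ > (0 : ℝ), ∃ η > (0 : ℝ), ∀ ω, γ < dist ω m₀ → G m₀ + η ≤ G ω) :
    Tendsto m l (𝓝 m₀) := by
  rw [Metric.tendsto_nhds]
  intro ε hε
  obtain ⟨η, hη, hG⟩ := hsep (ε / 2) (half_pos hε)
  filter_upwards [Metric.tendstoUniformly_iff.mp hF (η / 2) (half_pos hη), hm] with i hi hmi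
  by_contra! hfar
  have hgap := hG (m i) (by linarith)
  have hclose_m := abs_lt.mp (Real.dist_eq _ _ ▸ hi (m i))
  have hclose_m₀ := abs_lt.mp (Real.dist_eq _ _ ▸ hi m₀)
  linarith [hmi m₀]

theorem abs_dist_sq_sub_dist_sq_le {Ω : Type*} [PseudoMetricSpace Ω] {D : ℝ}
    (hD : ∀ a b : Ω, dist a b ≤ D) (ω x y : Ω) :
    |dist ω x ^ 2 - dist ω y ^ 2| ≤ 2 * D * dist x y := by
  have hdiff : |dist ω x - dist ω y| ≤ dist x y := by
    rw [dist_comm ω x, dist_comm ω y]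
    exact abs_dist_sub_le _ _ _
  have hsum : |dist ω x + dist ω y| ≤ 2 * D := by
    rw [abs_of_nonneg (by positivity)]
    linarith [hD ω x, hD ω y]
  calc |dist ω x ^ 2 - dist ω y ^ 2|
      = |dist ω x + dist ω y| * |dist ω x - dist ω y| := by rw [← abs_mul, ← sq_sub_sq]
    _ ≤ 2 * D * dist x y := mul_le_mul hsum hdiff (abs_nonneg _) ((abs_nonneg _).trans hsum)

section Frechet

variable {α Ω : Type*} {mα : MeasurableSpace α} {μ : Measure α} [IsFiniteMeasure μ]
  [PseudoMetricSpace Ω] {D : ℝ}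

noncomputable def frechetFunction (μ : Measure α) (Y : α → Ω) (ω : Ω) : ℝ :=
  ∫ a, dist ω (Y a) ^ 2 ∂μ

theorem integrable_dist_of_bounded (hD : ∀ a b : Ω, dist a b ≤ D) {Y Z : α → Ω}
    (hY : AEStronglyMeasurable Y μ) (hZ : AEStronglyMeasurable Z μ) :
    Integrable (fun a => dist (Y a) (Z a)) μ :=
  .of_bound (hY.dist hZ) D <| ae_of_all _ fun a => by
    rw [Real.norm_eq_abs, abs_of_nonneg dist_nonneg]
    exact hD _ _

theorem integrable_dist_sq_of_bounded (hD : ∀ a b : Ω, dist a b ≤ D) {Y : α → Ω}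
    (hY : AEStronglyMeasurable Y μ) (ω : Ω) :
    Integrable (fun a => dist ω (Y a) ^ 2) μ :=
  .of_bound ((aestronglyMeasurable_const.dist hY).pow 2) (D ^ 2) <| ae_of_all _ fun a => by
    rw [Real.norm_eq_abs, abs_of_nonneg (by positivity)]
    exact pow_le_pow_left₀ dist_nonneg (hD _ _) 2

theorem abs_frechetFunction_sub_le (hD : ∀ a b : Ω, dist a b ≤ D) {Y Z : α → Ω}
    (hY : AEStronglyMeasurable Y μ) (hZ : AEStronglyMeasurable Z μ) (ω : Ω) :
    |frechetFunction μ Y ω - frechetFunction μ Z ω| ≤ 2 * D * ∫ a, dist (Y a) (Z a) ∂μ := by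
  rw [frechetFunction, frechetFunction, ← integral_sub (integrable_dist_sq_of_bounded hD hY ω)
    (integrable_dist_sq_of_bounded hD hZ ω), ← integral_const_mul]
  refine abs_integral_le_integral_abs.trans <| integral_mono_of_nonneg
    (ae_of_all _ fun _ => abs_nonneg _) ((integrable_dist_of_bounded hD hY hZ).const_mul _)
    (ae_of_all _ fun a => abs_dist_sq_sub_dist_sq_le hD ω (Y a) (Z a))

theorem tendsto_integral_dist_of_bounded (hD : ∀ a b : Ω, dist a b ≤ D) {ι : Type*}
    {l : Filter ι} [l.IsCountablyGenerated] {Y : ι → α → Ω} {Y₀ : α → Ω}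
    (hY : ∀ᶠ i in l, AEStronglyMeasurable (Y i) μ) (hY₀ : AEStronglyMeasurable Y₀ μ)
    (hlim : ∀ᵐ a ∂μ, Tendsto (fun i => Y i a) l (𝓝 (Y₀ a))) :
    Tendsto (fun i => ∫ a, dist (Y i a) (Y₀ a) ∂μ) l (𝓝 0) := by
  have hdom := tendsto_integral_filter_of_dominated_convergence (μ := μ) (l := l)
    (F := fun i a => dist (Y i a) (Y₀ a)) (f := fun _ => 0) (fun _ => D)
    (hY.mono fun i hi => hi.dist hY₀)
    (Eventually.of_forall fun i => ae_of_all _ fun a => by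
      rw [Real.norm_eq_abs, abs_of_nonneg dist_nonneg]
      exact hD _ _)
    (integrable_const D)
    (hlim.mono fun a ha => tendsto_iff_dist_tendsto_zero.mp ha)
  simpa using hdom

theorem tendstoUniformly_frechetFunction (hD : ∀ a b : Ω, dist a b ≤ D) {ι : Type*}
    {l : Filter ι} [l.IsCountablyGenerated] {Y : ι → α → Ω} {Y₀ : α → Ω}
    (hY : ∀ᶠ i in l, AEStronglyMeasurable (Y i) μ) (hY₀ : AEStronglyMeasurable Y₀ μ)
    (hlim : ∀ᵐ a ∂μ, Tendsto (fun i => Y i a) l (𝓝 (Y₀ a))) :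
    TendstoUniformly (fun i => frechetFunction μ (Y i)) (frechetFunction μ Y₀) l := by
  rw [Metric.tendstoUniformly_iff]
  intro ε hε
  have hsmall := (tendsto_integral_dist_of_bounded hD hY hY₀ hlim).const_mul (2 * D)
  rw [mul_zero] at hsmall
  filter_upwards [hsmall.eventually_lt_const hε, hY] with i hi hYi ω
  rw [dist_comm, Real.dist_eq]
  exact (abs_frechetFunction_sub_le hD hYi hY₀ ω).trans_lt hi

end Frechet

theorem stmt_14_general {α Ω : Type*} {mα : MeasurableSpace α} (μ : Measure α) [IsProbabilityMeasure μ]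
    [MetricSpace Ω] (D : ℝ) (hD : ∀ a b : Ω, dist a b ≤ D)
    (X : α → ℝ → Ω)
    (hcont : ∀ᵐ a ∂μ, ContinuousOn (X a) (Set.Icc 0 1))
    (hmeas : ∀ t ∈ Set.Icc (0:ℝ) 1, AEStronglyMeasurable (fun a => X a t) μ)
    (μF : ℝ → Ω)
    (hmin : ∀ t ∈ Set.Icc (0:ℝ) 1, ∀ ω : Ω,
      (∫ a, (dist (μF t) (X a t)) ^ 2 ∂μ) ≤ ∫ a, (dist ω (X a t)) ^ 2 ∂μ)
    (hsep : ∀ t ∈ Set.Icc (0:ℝ) 1, ∀ γ > (0:ℝ), ∃ η > (0:ℝ), ∀ ω : Ω,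
      γ < dist ω (μF t) →
      (∫ a, (dist (μF t) (X a t)) ^ 2 ∂μ) + η ≤ ∫ a, (dist ω (X a t)) ^ 2 ∂μ) :
    ContinuousOn μF (Set.Icc 0 1) := by
  intro t ht
  have hunif : TendstoUniformly (fun s => frechetFunction μ (fun a => X a s))
      (frechetFunction μ (fun a => X a t)) (𝓝[Icc 0 1] t) :=
    tendstoUniformly_frechetFunction hD (eventually_mem_nhdsWithin.mono hmeas) (hmeas t ht)
      (hcont.mono fun a ha => (ha t ht).tendsto)
  exact tendsto_of_tendstoUniformly_of_separated_min hunif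
    (eventually_mem_nhdsWithin.mono hmin) (hsep t ht)

/-- For a bounded metric space `(Ω,d)` and an `Ω`-valued process `X` on `[0,1]` with
almost surely continuous paths, if for each `t` the Fréchet mean
`μ(t) = argmin_ω E[d²(ω,X(t))]` exists, is unique, and is a well-separated minimum, then
`t ↦ μ(t)` is continuous on `[0,1]`. -/
theorem stmt_14 {α Ω : Type*} {mα : MeasurableSpace α} (μ : Measure α) [IsProbabilityMeasure μ]
    [MetricSpace Ω] (D : ℝ) (hD : ∀ a b : Ω, dist a b ≤ D)
    (X : α → ℝ → Ω)
    (hcont : ∀ᵐ a ∂μ, ContinuousOn (X a) (Set.Icc 0 1))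
    (hmeas : ∀ t ∈ Set.Icc (0:ℝ) 1, AEStronglyMeasurable (fun a => X a t) μ)
    (μF : ℝ → Ω)
    (hmin : ∀ t ∈ Set.Icc (0:ℝ) 1, ∀ ω : Ω,
      (∫ a, (dist (μF t) (X a t)) ^ 2 ∂μ) ≤ ∫ a, (dist ω (X a t)) ^ 2 ∂μ)
    (huniq : ∀ t ∈ Set.Icc (0:ℝ) 1, ∀ ω : Ω,
      (∀ ω' : Ω, (∫ a, (dist ω (X a t)) ^ 2 ∂μ) ≤ ∫ a, (dist ω' (X a t)) ^ 2 ∂μ) → ω = μF t)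
    (hsep : ∀ t ∈ Set.Icc (0:ℝ) 1, ∀ γ > (0:ℝ), ∃ η > (0:ℝ), ∀ ω : Ω,
      γ < dist ω (μF t) →
      (∫ a, (dist (μF t) (X a t)) ^ 2 ∂μ) + η ≤ ∫ a, (dist ω (X a t)) ^ 2 ∂μ) :
    ContinuousOn μF (Set.Icc 0 1) :=
  stmt_14_general (mα := mα) μ D hD X hcont hmeas μF hmin hsep
end

section
/- Let (Ω,d_W) be the space of probability distributions on a compact interval with the 2-Wasserstein metric, S:[0,1]→Ω with continuous quantile-function representation Q(S(t)), and φ:[0,1]→ℝ continuous with ∫₀¹φ = 1. Define Q*(u) = ∫₀¹ Q(S(t))(u) φ(t) dt. Then for every ω ∈ Ω, ∫₀¹ d_W²(ω, S(t)) φ(t) dt = d_{L²}²(Q(ω), Q*) + c where c does not depend on ω; hence the generalized Fréchet integral ∫_⊕ S φ equals the distribution whose quantile function is the metric projection of Q* onto the convex set of quantile functions, and the Fréchet functional satisfies the quadratic growth I(ω) − I(∫_⊕Sφ) ≥ d_W²(ω, ∫_⊕Sφ) near the minimizer up to the projection inequality. -/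
open MeasureTheory Set

/-!
After swapping the order of integration, the Fréchet functional becomes
`∫ᵤ ∫ₜ (Q ω u - Q (S t) u)² φ t`, and for each fixed `u` the weighted bias–variance identity
(this is where `∫ φ = 1` enters) splits the inner integral into `(Q ω u - Q* u)²` plus a term
that does not involve `ω`. Hence the functional is `‖Q ω - Q*‖²_{L²} + c`, and the projection
inequality `⟨Q* - Q ω*, Q ω - Q ω*⟩ ≤ 0` yields the Pythagorean inequality
`‖Q ω - Q*‖² ≥ ‖Q ω - Q ω*‖² + ‖Q ω* - Q*‖²`, which is the quadratic growth.
-/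

theorem continuousOn_intervalIntegral_of_continuousOn_uncurry {E : Type*}
    [NormedAddCommGroup E] [NormedSpace ℝ E] {F : ℝ → ℝ → E} {a b c d : ℝ}
    (hF : ContinuousOn (Function.uncurry F) (uIcc a b ×ˢ uIcc c d)) :
    ContinuousOn (fun y => ∫ x in a..b, F x y) (uIcc c d) := by
  -- extend `F` continuously to the plane by precomposing with the retractions onto the intervals
  let r (p q x : ℝ) : ℝ := projIcc (p ⊓ q) (p ⊔ q) inf_le_sup x
  have hr_mem (p q x : ℝ) : r p q x ∈ uIcc p q := (projIcc _ _ _ x).2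
  have hr_eq {p q x : ℝ} (hx : x ∈ uIcc p q) : r p q x = x := by simp only [r, projIcc_of_mem _ hx]
  have hr (p q : ℝ) : Continuous (r p q) := continuous_subtype_val.comp continuous_projIcc
  have hF' : Continuous fun z : ℝ × ℝ => F (r a b z.2) (r c d z.1) :=
    hF.comp_continuous (f := fun z : ℝ × ℝ => (r a b z.2, r c d z.1))
      (((hr a b).comp continuous_snd).prodMk ((hr c d).comp continuous_fst))
      fun z => ⟨hr_mem a b z.2, hr_mem c d z.1⟩
  refine (intervalIntegral.continuous_parametric_intervalIntegral_of_continuous' (μ := volume)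
    (f := fun y x => F (r a b x) (r c d y)) hF' a b).continuousOn.congr fun y hy => ?_
  exact intervalIntegral.integral_congr fun x hx => by simp only [hr_eq hx, hr_eq hy]

theorem intervalIntegral_intervalIntegral_swap_of_continuousOn {E : Type*}
    [NormedAddCommGroup E] [NormedSpace ℝ E] {F : ℝ → ℝ → E} {a b c d : ℝ}
    (hF : ContinuousOn (Function.uncurry F) (uIcc a b ×ˢ uIcc c d)) :
    ∫ x in a..b, ∫ y in c..d, F x y = ∫ y in c..d, ∫ x in a..b, F x y :=
  intervalIntegral_intervalIntegral_swap <|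
    (hF.integrableOn_compact (isCompact_uIcc.prod isCompact_uIcc)).mono_set
      (prod_mono uIoc_subset_uIcc uIoc_subset_uIcc)

theorem integral_sub_sq_mul_eq_of_integral_eq_one {g w : ℝ → ℝ} {a b : ℝ} (x : ℝ)
    (hw : IntervalIntegrable w volume a b)
    (hgw : IntervalIntegrable (fun t => g t * w t) volume a b)
    (hg2w : IntervalIntegrable (fun t => g t ^ 2 * w t) volume a b)
    (hw1 : ∫ t in a..b, w t = 1) :
    ∫ t in a..b, (x - g t) ^ 2 * w t
      = (x - ∫ t in a..b, g t * w t) ^ 2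
        + ((∫ t in a..b, g t ^ 2 * w t) - (∫ t in a..b, g t * w t) ^ 2) := by
  have hexpand : ∫ t in a..b, (x - g t) ^ 2 * w t
      = ∫ t in a..b, (x ^ 2 * w t - 2 * x * (g t * w t) + g t ^ 2 * w t) :=
    intervalIntegral.integral_congr fun t _ => by ring
  rw [hexpand, intervalIntegral.integral_add ((hw.const_mul _).sub (hgw.const_mul _)) hg2w,
    intervalIntegral.integral_sub (hw.const_mul _) (hgw.const_mul _),
    intervalIntegral.integral_const_mul, intervalIntegral.integral_const_mul, hw1]
  ring

theorem integral_integral_sub_sq_mul_eq {f w : ℝ → ℝ} {G : ℝ → ℝ → ℝ} {a b c d : ℝ}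
    (hf : ContinuousOn f (uIcc c d)) (hG : ContinuousOn (Function.uncurry G) (uIcc a b ×ˢ uIcc c d))
    (hw : ContinuousOn w (uIcc a b)) (hw1 : ∫ t in a..b, w t = 1) :
    ∫ t in a..b, (∫ u in c..d, (f u - G t u) ^ 2) * w t
      = (∫ u in c..d, (f u - ∫ t in a..b, G t u * w t) ^ 2)
        + ∫ u in c..d, ((∫ t in a..b, G t u ^ 2 * w t) - (∫ t in a..b, G t u * w t) ^ 2) := by
  have hw' : ContinuousOn (fun p : ℝ × ℝ => w p.1) (uIcc a b ×ˢ uIcc c d) :=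
    hw.comp continuousOn_fst fun _ hp => hp.1
  have hG2w : ContinuousOn (fun p : ℝ × ℝ => G p.1 p.2 ^ 2 * w p.1) (uIcc a b ×ˢ uIcc c d) :=
    (hG.pow 2).mul hw'
  have hintegrand : ContinuousOn (fun p : ℝ × ℝ => (f p.2 - G p.1 p.2) ^ 2 * w p.1)
      (uIcc a b ×ˢ uIcc c d) :=
    (((hf.comp continuousOn_snd fun _ hp => hp.2).sub hG).pow 2).mul hw'
  have hmean := continuousOn_intervalIntegral_of_continuousOn_uncurry
    (F := fun t u => G t u * w t) (hG.mul hw')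
  have hsecond := continuousOn_intervalIntegral_of_continuousOn_uncurry
    (F := fun t u => G t u ^ 2 * w t) hG2w
  have hGu {u : ℝ} (hu : u ∈ uIcc c d) : ContinuousOn (fun t => G t u) (uIcc a b) :=
    hG.comp (Continuous.prodMk_left u).continuousOn fun _ ht => ⟨ht, hu⟩
  calc ∫ t in a..b, (∫ u in c..d, (f u - G t u) ^ 2) * w t
      = ∫ t in a..b, ∫ u in c..d, (f u - G t u) ^ 2 * w t := by
        simp only [intervalIntegral.integral_mul_const]
    _ = ∫ u in c..d, ∫ t in a..b, (f u - G t u) ^ 2 * w t :=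
        intervalIntegral_intervalIntegral_swap_of_continuousOn
          (F := fun t u => (f u - G t u) ^ 2 * w t) hintegrand
    _ = ∫ u in c..d, ((f u - ∫ t in a..b, G t u * w t) ^ 2
          + ((∫ t in a..b, G t u ^ 2 * w t) - (∫ t in a..b, G t u * w t) ^ 2)) :=
        intervalIntegral.integral_congr fun u hu =>
          integral_sub_sq_mul_eq_of_integral_eq_one _ hw.intervalIntegrable
            ((hGu hu).mul hw).intervalIntegrable (((hGu hu).pow 2).mul hw).intervalIntegrable hw1
    _ = _ := intervalIntegral.integral_add ((hf.sub hmean).pow 2).intervalIntegrable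
        (hsecond.sub (hmean.pow 2)).intervalIntegrable

theorem integral_sub_sq_add_integral_sub_sq_le {f g h : ℝ → ℝ} {a b : ℝ}
    (hf : ContinuousOn f (uIcc a b)) (hg : ContinuousOn g (uIcc a b))
    (hh : ContinuousOn h (uIcc a b))
    (hobtuse : ∫ u in a..b, (h u - g u) * (f u - g u) ≤ 0) :
    (∫ u in a..b, (g u - h u) ^ 2) + ∫ u in a..b, (f u - g u) ^ 2
      ≤ ∫ u in a..b, (f u - h u) ^ 2 := by
  have hexpand : ∫ u in a..b, (f u - h u) ^ 2
      = ∫ u in a..b, ((g u - h u) ^ 2 + (f u - g u) ^ 2 - 2 * ((h u - g u) * (f u - g u))) :=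
    intervalIntegral.integral_congr fun u _ => by ring
  rw [hexpand, intervalIntegral.integral_sub, intervalIntegral.integral_add,
    intervalIntegral.integral_const_mul]
  · linarith
  all_goals exact ContinuousOn.intervalIntegrable (by fun_prop)

/-- For the space of distributions on a compact interval with the 2-Wasserstein metric,
represented through quantile functions `Q`, with `S : [0,1] → Ω` and `φ` continuous with
`∫₀¹ φ = 1`, and `Q*(u) = ∫₀¹ Q(S(t))(u) φ(t) dt`:
(i) `∫₀¹ d_W²(ω,S(t)) φ(t) dt = ‖Q(ω) - Q*‖²_{L²} + c` with `c` not depending on `ω`;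
(ii) hence, whenever `ω*` satisfies the projection inequality
`⟨Q* - Q(ω*), Q(ω) - Q(ω*)⟩ ≤ 0` for all `ω`, it is the generalized Fréchet integral,
with quadratic growth `I(ω) - I(ω*) ≥ d_W²(ω, ω*)`. -/
theorem stmt_19 {Ω : Type*} (Q : Ω → ℝ → ℝ) (S : ℝ → Ω) (φ : ℝ → ℝ)
    (hQcont : ∀ ω : Ω, ContinuousOn (Q ω) (Set.Icc 0 1))
    (hScont : ContinuousOn (fun p : ℝ × ℝ => Q (S p.1) p.2)
      (Set.Icc 0 1 ×ˢ Set.Icc 0 1))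
    (hφ : ContinuousOn φ (Set.Icc 0 1))
    (hφ1 : (∫ t in (0:ℝ)..1, φ t) = 1) :
    ∃ c : ℝ,
      (∀ ω : Ω,
        (∫ t in (0:ℝ)..1, (∫ u in (0:ℝ)..1, (Q ω u - Q (S t) u) ^ 2) * φ t)
          = (∫ u in (0:ℝ)..1, (Q ω u - ∫ t in (0:ℝ)..1, Q (S t) u * φ t) ^ 2) + c) ∧
      ∀ ωstar : Ω,
        (∀ ω : Ω, (∫ u in (0:ℝ)..1,
            ((∫ t in (0:ℝ)..1, Q (S t) u * φ t) - Q ωstar u) * (Q ω u - Q ωstar u)) ≤ 0) →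
        ((∀ ω : Ω,
          (∫ t in (0:ℝ)..1, (∫ u in (0:ℝ)..1, (Q ωstar u - Q (S t) u) ^ 2) * φ t)
            ≤ ∫ t in (0:ℝ)..1, (∫ u in (0:ℝ)..1, (Q ω u - Q (S t) u) ^ 2) * φ t) ∧
         ∀ ω : Ω,
          (∫ t in (0:ℝ)..1, (∫ u in (0:ℝ)..1, (Q ωstar u - Q (S t) u) ^ 2) * φ t)
              + (∫ u in (0:ℝ)..1, (Q ω u - Q ωstar u) ^ 2)
            ≤ ∫ t in (0:ℝ)..1, (∫ u in (0:ℝ)..1, (Q ω u - Q (S t) u) ^ 2) * φ t) := by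
  simp only [← uIcc_of_le zero_le_one] at hQcont hScont hφ
  have hdecomp (ω : Ω) :=
    integral_integral_sub_sq_mul_eq (G := fun t u => Q (S t) u) (hQcont ω) hScont hφ hφ1
  refine ⟨_, hdecomp, fun ωstar hproj => ?_⟩
  have hQstar : ContinuousOn (fun u => ∫ t in (0:ℝ)..1, Q (S t) u * φ t) (uIcc 0 1) :=
    continuousOn_intervalIntegral_of_continuousOn_uncurry (F := fun t u => Q (S t) u * φ t)
      (hScont.mul (hφ.comp continuousOn_fst fun _ hp => hp.1))
  have hgrowth (ω : Ω) :
      (∫ t in (0:ℝ)..1, (∫ u in (0:ℝ)..1, (Q ωstar u - Q (S t) u) ^ 2) * φ t)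
          + (∫ u in (0:ℝ)..1, (Q ω u - Q ωstar u) ^ 2)
        ≤ ∫ t in (0:ℝ)..1, (∫ u in (0:ℝ)..1, (Q ω u - Q (S t) u) ^ 2) * φ t := by
    rw [hdecomp ω, hdecomp ωstar]
    linarith [integral_sub_sq_add_integral_sub_sq_le (hQcont ω) (hQcont ωstar) hQstar (hproj ω)]
  refine ⟨fun ω => ?_, hgrowth⟩
  linarith [hgrowth ω, intervalIntegral.integral_nonneg (μ := volume) zero_le_one fun u _ =>
    sq_nonneg (Q ω u - Q ωstar u)]
end
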